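/- If G is a tree with diam(G) ≥ 3, then pc(Ḡ) = 2. -/

import Mathlib

open SimpleGraph

/-- An edge-coloring `c` with `k` colors is a proper-path coloring of `G` if every pair of
distinct vertices is joined by a path on which no two consecutive edges share a color. -/
def IsProperPathColoring {V : Type*} (G : SimpleGraph V) {k : ℕ}
    (c : Sym2 V → Fin k) : Prop :=
  ∀ u v : V, u ≠ v → ∃ p : G.Walk u v, p.IsPath ∧ (p.edges.map c).Chain' (· ≠ ·)

/-- The proper connection number of `G`: the least number of colors in a
proper-path coloring of `G`. -/
noncomputable def pc {V : Type*} (G : SimpleGraph V) : ℕ :=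
  sInf {k : ℕ | ∃ c : Sym2 V → Fin k, IsProperPathColoring G c}

/-!
Color the complement of a tree `G` through a proper 2-coloring `C` of `G`: an edge of `Gᶜ`
gets color `0` if its ends are on the same side of `C` and `1` otherwise. Vertices on the
same side are adjacent in `Gᶜ`, as are non-adjacent vertices of `G`. The remaining pairs are
edges `xy` of `G`. Since `diam G ≥ 3`, each side has at least two vertices: pick `a ≠ x` on
the side of `x` and `b ≠ y` on the side of `y`. Then one of `x a y`, `x b y`, `x a b y` is a
properly colored path in `Gᶜ`, the last because `a y x b a` is not a 4-cycle of the tree.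
Two colors are needed since `Gᶜ` is not complete.
-/

namespace SimpleGraph

variable {V β : Type*} {G : SimpleGraph V} {k : ℕ} {c : Sym2 V → Fin k} {u v w x : V}

def ProperlyConnected (G : SimpleGraph V) (c : Sym2 V → Fin k) (u v : V) : Prop :=
  ∃ p : G.Walk u v, p.IsPath ∧ (p.edges.map c).IsChain (· ≠ ·)

theorem isProperPathColoring_iff :
    IsProperPathColoring G c ↔ ∀ u v, u ≠ v → G.ProperlyConnected c u v :=
  Iff.rfl

theorem ProperlyConnected.of_adj (h : G.Adj u v) : G.ProperlyConnected c u v :=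
  ⟨.cons h .nil, by simp [h.ne], by simp⟩

theorem ProperlyConnected.of_adj_adj (huv : G.Adj u v) (hvw : G.Adj v w) (huw : u ≠ w)
    (hc : c s(u, v) ≠ c s(v, w)) : G.ProperlyConnected c u w :=
  ⟨.cons huv (.cons hvw .nil), by simp [huv.ne, hvw.ne, huw], by simp [hc]⟩

theorem ProperlyConnected.of_adj_adj_adj (huv : G.Adj u v) (hvw : G.Adj v w) (hwx : G.Adj w x)
    (huw : u ≠ w) (hvx : v ≠ x) (hux : u ≠ x) (hc₁ : c s(u, v) ≠ c s(v, w))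
    (hc₂ : c s(v, w) ≠ c s(w, x)) : G.ProperlyConnected c u x :=
  ⟨.cons huv (.cons hvw (.cons hwx .nil)), by simp [huv.ne, hvw.ne, hwx.ne, huw, hvx, hux],
    by simp [hc₁, hc₂]⟩

theorem two_le_of_isProperPathColoring (hc : IsProperPathColoring G c) (huv : u ≠ v)
    (hadj : ¬G.Adj u v) : 2 ≤ k := by
  obtain ⟨p, -, hp⟩ := hc u v huv
  rcases p with _ | ⟨h₁, _ | ⟨h₂, q⟩⟩
  · exact absurd rfl huv
  · exact absurd h₁ hadj
  · simp only [Walk.edges_cons, List.map_cons] at hp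
    exact Fin.nontrivial_iff_two_le.mp ⟨_, _, hp.rel⟩

theorem pc_eq_two {c : Sym2 V → Fin 2} (hc : IsProperPathColoring G c) (huv : u ≠ v)
    (hadj : ¬G.Adj u v) : pc G = 2 :=
  le_antisymm (Nat.sInf_le ⟨c, hc⟩)
    (le_csInf ⟨2, c, hc⟩ fun _ ⟨_, hc'⟩ ↦ two_le_of_isProperPathColoring hc' huv hadj)

theorem IsAcyclic.not_adj_of_adj_adj_adj (hG : G.IsAcyclic) (huv : G.Adj u v) (hvw : G.Adj v w)
    (hwx : G.Adj w x) (huw : u ≠ w) (hvx : v ≠ x) : ¬G.Adj x u := by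
  intro hxu
  have hlong : (Walk.cons huv (.cons hvw (.cons hwx .nil))).IsPath := by
    simp [huv.ne, hvw.ne, hwx.ne, huw, hvx, hxu.ne.symm]
  have hshort : (Walk.cons hxu.symm .nil).IsPath := by simp [hxu.ne.symm]
  have hpaths := (hG.subsingleton_path u x).elim ⟨_, hlong⟩ ⟨_, hshort⟩
  simpa using congrArg (fun p : G.Path u x ↦ p.1.length) hpaths

theorem exists_adj_adj_adj_of_three_le_diam (hd : 3 ≤ G.diam) :
    ∃ u v w x, G.Adj u v ∧ G.Adj v w ∧ G.Adj w x ∧ u ≠ w ∧ v ≠ x := by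
  have : Nonempty V := (G.nontrivial_of_diam_ne_zero (by omega)).to_nonempty
  obtain ⟨u, x, hux⟩ := G.exists_dist_eq_diam
  obtain ⟨p, hp⟩ := G.exists_walk_of_dist_ne_zero (u := u) (v := x) (by omega)
  have hpath := p.isPath_of_length_eq_dist hp
  rcases p with _ | ⟨h₁, _ | ⟨h₂, _ | ⟨h₃, q⟩⟩⟩ <;> simp only [Walk.length_cons,
    Walk.length_nil] at hp
  · omega
  · omega
  · omega
  · simp only [Walk.cons_isPath_iff, Walk.support_cons, List.mem_cons, not_or] at hpath
    exact ⟨_, _, _, _, h₁, h₂, h₃, hpath.2.2.1,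
      (ne_of_mem_of_not_mem q.start_mem_support hpath.1.2.2).symm⟩

theorem Coloring.exists_ne_eq_of_adj_adj_adj (C : G.Coloring (Fin 2)) (huv : G.Adj u v)
    (hvw : G.Adj v w) (hwx : G.Adj w x) (huw : u ≠ w) (hvx : v ≠ x) (y : V) :
    ∃ z, z ≠ y ∧ C z = C y := by
  have huv' := C.valid huv
  have hvw' := C.valid hvw
  have hwx' := C.valid hwx
  rcases (by omega : C y = C u ∨ C y = C v) with hy | hy
  · by_cases hyu : y = u
    · exact ⟨w, hyu ▸ huw.symm, by omega⟩
    · exact ⟨u, Ne.symm hyu, hy.symm⟩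
  · by_cases hyv : y = v
    · exact ⟨x, hyv ▸ hvx.symm, by omega⟩
    · exact ⟨v, Ne.symm hyv, hy.symm⟩

def sideColoring [DecidableEq β] (C : V → β) (e : Sym2 V) : Fin 2 :=
  if (e.map C).IsDiag then 0 else 1

theorem sideColoring_mk [DecidableEq β] (C : V → β) (u v : V) :
    sideColoring C s(u, v) = if C u = C v then 0 else 1 := by
  simp [sideColoring]

theorem IsAcyclic.isProperPathColoring_compl_sideColoring [DecidableEq β] (hG : G.IsAcyclic)
    (C : G.Coloring β) (hC : ∀ x, ∃ y, y ≠ x ∧ C y = C x) :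
    IsProperPathColoring Gᶜ (sideColoring C) := by
  rw [isProperPathColoring_iff]
  intro x y hxy
  by_cases hGxy : G.Adj x y
  swap
  · exact .of_adj ⟨hxy, hGxy⟩
  have hCxy : C x ≠ C y := C.valid hGxy
  obtain ⟨a, hax, hCa⟩ := hC x
  obtain ⟨b, hby, hCb⟩ := hC y
  have hxa : Gᶜ.Adj x a := ⟨hax.symm, fun h ↦ C.valid h hCa.symm⟩
  have hby' : Gᶜ.Adj b y := ⟨hby, fun h ↦ C.valid h hCb⟩
  have hay : a ≠ y := fun h ↦ hCxy (by rw [← hCa, h])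
  have hxb : x ≠ b := fun h ↦ hCxy (by rw [h, hCb])
  by_cases hGay : G.Adj a y
  swap
  · exact .of_adj_adj hxa ⟨hay, hGay⟩ hxy (by simp [sideColoring_mk, hCa, hCxy])
  by_cases hGxb : G.Adj x b
  swap
  · exact .of_adj_adj ⟨hxb, hGxb⟩ hby' hxy (by simp [sideColoring_mk, hCb, hCxy])
  have hab : a ≠ b := fun h ↦ hCxy (hCa ▸ hCb ▸ congrArg C h)
  have hGab : ¬G.Adj a b := fun h ↦
    hG.not_adj_of_adj_adj_adj hGay hGxy.symm hGxb hax hby.symm h.symm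
  exact .of_adj_adj_adj hxa ⟨hab, hGab⟩ hby' hxb hay hxy
    (by simp [sideColoring_mk, hCa, hCb, hCxy]) (by simp [sideColoring_mk, hCa, hCb, hCxy])

end SimpleGraph

theorem pc_compl_tree_diam_ge_three_general {V : Type*} (G : SimpleGraph V)
    (hac : G.IsAcyclic) (hd : 3 ≤ G.diam) :
    pc Gᶜ = 2 := by
  obtain ⟨u, v, w, x, huv, hvw, hwx, huw, hvx⟩ := exists_adj_adj_adj_of_three_le_diam hd
  have hC := hac.coloringTwo.exists_ne_eq_of_adj_adj_adj huv hvw hwx huw hvx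
  exact pc_eq_two (hac.isProperPathColoring_compl_sideColoring _ hC) huv.ne
    (by simp [compl_adj, huv])

/-- If `G` is a tree with diameter at least 3, then `pc Gᶜ = 2`. -/
theorem pc_compl_tree_diam_ge_three {V : Type*} [Fintype V] (G : SimpleGraph V)
    (hconn : G.Connected) (hac : G.IsAcyclic) (hd : 3 ≤ G.diam) :
    pc Gᶜ = 2 :=
  pc_compl_tree_diam_ge_three_general G hac hd
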